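/- arXiv:math/0008236 — 3 statements merged into one kernel-verified Lean document; each statement's English description precedes it below -/
import Mathlib

section
/- Let F ⊣ G be an adjunction between categories X and Y with unit u : 1 → GF and counit v : FG → 1. Then the following are equivalent: (a) Fu : F → FGF is a natural isomorphism; (a') vF : FGF → F is a natural isomorphism; (b) uG : G → GFG is a natural isomorphism; (b') Gv : GFG → G is a natural isomorphism. -/
open CategoryTheory

private theorem isIso_iff_of_comp_id {C : Type*} [Category C] {a b : C}
    (f : a ⟶ b) (g : b ⟶ a) (h : f ≫ g = 𝟙 a) : IsIso f ↔ IsIso g := by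
  constructor
  · intro hf
    haveI : IsIso (f ≫ g) := by rw [h]; infer_instance
    exact IsIso.of_isIso_comp_left f g
  · intro hg
    haveI : IsIso (f ≫ g) := by rw [h]; infer_instance
    exact IsIso.of_isIso_comp_right f g

/-- For an adjunction `F ⊣ G` with unit `u` and counit `v`, the following are
equivalent: `Fu`, `vF`, `uG`, `Gv` are natural isomorphisms (Betti's notion of an
exact adjunction). -/
theorem stmt9 {X Y : Type*} [Category X] [Category Y]
    (F : X ⥤ Y) (G : Y ⥤ X) (adj : F ⊣ G) :
    List.TFAE [IsIso (Functor.whiskerRight adj.unit F),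
      IsIso (Functor.whiskerLeft F adj.counit),
      IsIso (Functor.whiskerLeft G adj.unit),
      IsIso (Functor.whiskerRight adj.counit G)] := by
  have htri1 : Functor.whiskerRight adj.unit F ≫ Functor.whiskerLeft F adj.counit = 𝟙 F := by
    ext x
    simp [adj.left_triangle_components x]
  have htri2 : Functor.whiskerLeft G adj.unit ≫ Functor.whiskerRight adj.counit G = 𝟙 G := by
    ext y
    simp [adj.right_triangle_components y]
  tfae_have 1 ↔ 2 := isIso_iff_of_comp_id _ _ htri1
  tfae_have 3 ↔ 4 := isIso_iff_of_comp_id _ _ htri2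
  tfae_have 1 → 3 := by
    intro h
    haveI : ∀ x, IsIso (F.map (adj.unit.app x)) := fun x => by
      have := NatIso.isIso_app_of_isIso (Functor.whiskerRight adj.unit F) x
      simpa using this
    have hcomp : ∀ y, IsIso (adj.unit.app (G.obj y)) := by
      intro y
      -- key : εFG = FGε at y
      have key : adj.counit.app (F.obj (G.obj y)) =
          F.map (G.map (adj.counit.app y)) := by
        rw [← cancel_epi (F.map (adj.unit.app (G.obj y))),
          adj.left_triangle_components (G.obj y), ← F.map_comp,
          adj.right_triangle_components]
        simp
      refine ⟨G.map (adj.counit.app y), adj.right_triangle_components y, ?_⟩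
      have hnat := adj.unit.naturality (G.map (adj.counit.app y))
      simp only [Functor.id_map, Functor.comp_map, Functor.id_obj,
        Functor.comp_obj] at hnat
      rw [hnat, ← key]
      exact adj.right_triangle_components _
    haveI : ∀ y, IsIso ((Functor.whiskerLeft G adj.unit).app y) := fun y => by
      simpa using hcomp y
    exact NatIso.isIso_of_isIso_app _
  tfae_have 3 → 1 := by
    intro h
    haveI : ∀ y, IsIso (adj.unit.app (G.obj y)) := fun y => by
      have := NatIso.isIso_app_of_isIso (Functor.whiskerLeft G adj.unit) y
      simpa using this
    haveI hGe : ∀ y, IsIso (G.map (adj.counit.app y)) := fun y =>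
      (isIso_iff_of_comp_id _ _ (adj.right_triangle_components y)).mp
        (by infer_instance)
    have hcomp : ∀ x, IsIso (F.map (adj.unit.app x)) := by
      intro x
      -- key : GFη = ηGF at x
      have key : G.map (F.map (adj.unit.app x)) =
          adj.unit.app (G.obj (F.obj x)) := by
        rw [← cancel_mono (G.map (adj.counit.app (F.obj x))),
          adj.right_triangle_components, ← G.map_comp,
          adj.left_triangle_components x]
        simp
      refine ⟨adj.counit.app (F.obj x), adj.left_triangle_components x, ?_⟩
      have hnat := adj.counit.naturality (F.map (adj.unit.app x))
      simp only [Functor.id_map, Functor.comp_map, Functor.id_obj,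
        Functor.comp_obj] at hnat
      rw [← hnat, key]
      exact adj.left_triangle_components _
    haveI : ∀ x, IsIso ((Functor.whiskerRight adj.unit F).app x) := fun x => by
      simpa using hcomp x
    exact NatIso.isIso_of_isIso_app _
  tfae_finish
end

section
/- In the arrow category of abelian groups with homotopies given by diagonal maps (α : A'' → B' with g' − f' = α∂, g'' − f'' = ∂α), let f = (f', f'') : A → B be a morphism with f' an isomorphism. Then f is a homotopy equivalence if and only if f is an isomorphism (i.e. f'' is also an isomorphism). Explicitly, if f' = 1 and (g, α, β) is an adjoint homotopy equivalence for f (with α : 1_A ≃ gf, β : fg ≃ 1_B, f∘α + β∘f = 0), then h = g'' + ∂_A β is a two-sided inverse of f''. -/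
/-! With `f' = 1` the homotopy `β : fg ≃ 1` reads `1 - f''g'' = ∂_B β`, and `∂_B = f''∂_A`
by commutativity of the square of `f`, so `f''(g'' + ∂_A β) = 1`. The homotopy `α : 1 ≃ gf`
reads `g''f'' - 1 = ∂_A α`, and the triangle identity `α = -βf''` turns this into
`(g'' + ∂_A β)f'' = 1`. -/

section DiagonalHomotopy

variable {Z A B : Type*} [AddCommGroup Z] [AddCommGroup A] [AddCommGroup B]
  (dA : Z →+ A) (dB : Z →+ B) (f : A →+ B) (g : B →+ A) (β : B →+ Z)

theorem rightInverse_add_comp_of_homotopy (hsq : ∀ z, f (dA z) = dB z)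
    (hβ : ∀ y, y - f (g y) = dB (β y)) :
    Function.RightInverse (fun y => g y + dA (β y)) f := by
  intro y
  show f (g y + dA (β y)) = y
  rw [map_add, hsq]
  linear_combination (norm := abel) -hβ y

theorem leftInverse_add_comp_of_homotopy (α : A →+ Z) (hα : ∀ x, g (f x) - x = dA (α x))
    (htri : ∀ x, α x + β (f x) = 0) :
    Function.LeftInverse (fun y => g y + dA (β y)) f := by
  intro x
  show g (f x) + dA (β (f x)) = x
  have hβf : β (f x) = -α x := eq_neg_of_add_eq_zero_right (htri x)
  rw [hβf, map_neg]
  linear_combination (norm := abel) hα x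

end DiagonalHomotopy

theorem stmt14_general {Z A'' B'' : Type*}
    [AddCommGroup Z] [AddCommGroup A''] [AddCommGroup B'']
    (dA : Z →+ A'') (dB : Z →+ B'') (f'' : A'' →+ B'')
    (hsq : ∀ z : Z, f'' (dA z) = dB z)
    (g'' : B'' →+ A'')
    (α : A'' →+ Z)
    (hα2 : ∀ x : A'', g'' (f'' x) - x = dA (α x))
    (β : B'' →+ Z)
    (hβ2 : ∀ y : B'', y - f'' (g'' y) = dB (β y))
    (htri : ∀ x : A'', α x + β (f'' x) = 0) :
    Function.Bijective f'' ∧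
      (∀ y : B'', f'' (g'' y + dA (β y)) = y) ∧
      (∀ x : A'', g'' (f'' x) + dA (β (f'' x)) = x) := by
  have hright := rightInverse_add_comp_of_homotopy dA dB f'' g'' β hsq hβ2
  have hleft := leftInverse_add_comp_of_homotopy dA f'' g'' β α hα2 htri
  exact ⟨⟨hleft.injective, hright.surjective⟩, hright, hleft⟩

/-- In the arrow category `Ab²` (objects `∂ : •' → •''`, morphisms commutative
squares, diagonal homotopies), a morphism `f = (f', f'')` with `f'` invertible is
a homotopy equivalence iff it is an isomorphism.  Explicitly, with `f' = 1`
(so `A' = B' = Z`) and an adjoint equivalence `(g, α : 1 ≃ gf, β : fg ≃ 1)`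
satisfying the triangle identity `f∘α + β∘f = 0`, the map `h = g'' + ∂_A β` is a
two-sided inverse of `f''`; in particular `f''` is bijective. -/
theorem stmt14 {Z A'' B'' : Type*}
    [AddCommGroup Z] [AddCommGroup A''] [AddCommGroup B'']
    (dA : Z →+ A'') (dB : Z →+ B'') (f'' : A'' →+ B'')
    (hsq : ∀ z : Z, f'' (dA z) = dB z)
    (g' : Z →+ Z) (g'' : B'' →+ A'')
    (hgsq : ∀ z : Z, g'' (dB z) = dA (g' z))
    (α : A'' →+ Z)
    (hα1 : ∀ z : Z, g' z - z = α (dA z))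
    (hα2 : ∀ x : A'', g'' (f'' x) - x = dA (α x))
    (β : B'' →+ Z)
    (hβ1 : ∀ z : Z, z - g' z = β (dB z))
    (hβ2 : ∀ y : B'', y - f'' (g'' y) = dB (β y))
    (htri : ∀ x : A'', α x + β (f'' x) = 0) :
    Function.Bijective f'' ∧
      (∀ y : B'', f'' (g'' y + dA (β y)) = y) ∧
      (∀ x : A'', g'' (f'' x) + dA (β (f'' x)) = x) :=
  stmt14_general dA dB f'' hsq g'' α hα2 β hβ2 htri
end

section
/- In the arrow category of abelian groups with diagonal homotopies, dually: if f = (f', f'') : A → B has f'' an isomorphism and f is a homotopy equivalence witnessed by an adjoint equivalence (g, α, β) with the other triangle identity α∘g + g∘β = 0, then g' − α∂_B is a two-sided inverse of f'; hence f is an isomorphism. -/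
/-!
A homotopy `γ` from the identity to an endomorphism `(h, k)` of an arrow commutes with it,
`h ∘ γ = γ ∘ k`. Applied to `α` and to `-β`, this turns the triangle identity
`α ∘ g'' + g' ∘ β = 0` into `f' ∘ α = -β`. Then `f' ∘ (g' - α ∂_B) = f' g' + β ∂_B = 1` by the
homotopy `β`, and `(g' - α ∂_B) ∘ f' = g' f' - α ∂_A = 1` by the homotopy `α`.
-/

theorem apply_homotopy_eq_homotopy_apply {X Z : Type*} [AddCommGroup X] [AddCommGroup Z]
    (d : X →+ Z) (h : X →+ X) (k : Z →+ Z) (γ : Z →+ X)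
    (hγ₁ : ∀ x : X, h x - x = γ (d x)) (hγ₂ : ∀ z : Z, k z - z = d (γ z)) (z : Z) :
    h (γ z) = γ (k z) := by
  have := hγ₁ (γ z)
  rwa [← hγ₂, map_sub, sub_left_inj] at this

section AdjointEquivalence

variable {A' B' Z : Type*} [AddCommGroup A'] [AddCommGroup B'] [AddCommGroup Z]
  {dA : A' →+ Z} {dB : B' →+ Z} {f' : A' →+ B'} {g' : B' →+ A'} {g'' : Z →+ Z}
  {α : Z →+ A'} {β : Z →+ B'}

theorem map_homotopy_eq_neg_homotopy
    (hsq : ∀ a : A', dB (f' a) = dA a)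
    (hα1 : ∀ a : A', g' (f' a) - a = α (dA a))
    (hα2 : ∀ z : Z, g'' z - z = dA (α z))
    (hβ1 : ∀ b : B', b - f' (g' b) = β (dB b))
    (hβ2 : ∀ z : Z, z - g'' z = dB (β z))
    (htri : ∀ z : Z, α (g'' z) + g' (β z) = 0) (z : Z) :
    f' (α z) = -β z := by
  have hα : g' (f' (α z)) = α (g'' z) :=
    apply_homotopy_eq_homotopy_apply dA (g'.comp f') g'' α hα1 hα2 z
  have hβ : f' (g' (β z)) = β (g'' z) := by
    simpa using apply_homotopy_eq_homotopy_apply dB (f'.comp g') g'' (-β)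
      (fun b => by rw [AddMonoidHom.neg_apply, ← hβ1, neg_sub]; rfl)
      (fun z => by rw [AddMonoidHom.neg_apply, map_neg, ← hβ2, neg_sub]) z
  calc f' (α z) = (f' (α z) - f' (g' (f' (α z)))) + f' (g' (f' (α z))) :=
        (sub_add_cancel _ _).symm
    _ = (β (g'' z) - β z) + -β (g'' z) := by
      rw [hβ1, hsq, ← hα2, map_sub, hα, eq_neg_of_add_eq_zero_left (htri z), map_neg, hβ]
    _ = -β z := by abel

end AdjointEquivalence

theorem stmt15_general {A' B' Z : Type*}
    [AddCommGroup A'] [AddCommGroup B'] [AddCommGroup Z]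
    (dA : A' →+ Z) (dB : B' →+ Z) (f' : A' →+ B')
    (hsq : ∀ a : A', dB (f' a) = dA a)
    (g' : B' →+ A') (g'' : Z →+ Z)
    (α : Z →+ A')
    (hα1 : ∀ a : A', g' (f' a) - a = α (dA a))
    (hα2 : ∀ z : Z, g'' z - z = dA (α z))
    (β : Z →+ B')
    (hβ1 : ∀ b : B', b - f' (g' b) = β (dB b))
    (hβ2 : ∀ z : Z, z - g'' z = dB (β z))
    (htri : ∀ z : Z, α (g'' z) + g' (β z) = 0) :
    Function.Bijective f' ∧
      (∀ b : B', f' (g' b - α (dB b)) = b) ∧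
      (∀ a : A', g' (f' a) - α (dB (f' a)) = a) := by
  have right (b : B') : f' (g' b - α (dB b)) = b := by
    rw [map_sub, map_homotopy_eq_neg_homotopy hsq hα1 hα2 hβ1 hβ2 htri, ← hβ1 b]
    abel
  have left (a : A') : g' (f' a) - α (dB (f' a)) = a := by
    rw [hsq a, ← hα1 a]
    abel
  exact ⟨⟨Function.LeftInverse.injective (g := fun b => g' b - α (dB b)) left,
    Function.RightInverse.surjective (g := fun b => g' b - α (dB b)) right⟩, right, left⟩

/-- Dual of Lemma 4.2 in the arrow category `Ab²`: if `f = (f', f'')` has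
`f'' = 1` (so `A'' = B'' = Z`) and `f` is a homotopy equivalence witnessed by an
adjoint equivalence `(g, α : 1 ≃ gf, β : fg ≃ 1)` with the triangle identity
`α∘g + g∘β = 0`, then `g' - α∂_B` is a two-sided inverse of `f'`; hence `f` is
an isomorphism. -/
theorem stmt15 {A' B' Z : Type*}
    [AddCommGroup A'] [AddCommGroup B'] [AddCommGroup Z]
    (dA : A' →+ Z) (dB : B' →+ Z) (f' : A' →+ B')
    (hsq : ∀ a : A', dB (f' a) = dA a)
    (g' : B' →+ A') (g'' : Z →+ Z)
    (hgsq : ∀ b : B', g'' (dB b) = dA (g' b))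
    (α : Z →+ A')
    (hα1 : ∀ a : A', g' (f' a) - a = α (dA a))
    (hα2 : ∀ z : Z, g'' z - z = dA (α z))
    (β : Z →+ B')
    (hβ1 : ∀ b : B', b - f' (g' b) = β (dB b))
    (hβ2 : ∀ z : Z, z - g'' z = dB (β z))
    (htri : ∀ z : Z, α (g'' z) + g' (β z) = 0) :
    Function.Bijective f' ∧
      (∀ b : B', f' (g' b - α (dB b)) = b) ∧
      (∀ a : A', g' (f' a) - α (dB (f' a)) = a) :=
  stmt15_general dA dB f' hsq g' g'' α hα1 hα2 β hβ1 hβ2 htri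
end
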